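/- Let d ≥ 1 and suppose D : ℝ^d → ℝ and ln ρ_eq : ℝ^d → ℝ have bounded derivatives up to order 4, ρ_eq > 0, and inf_x D(x) > 0. Then there exists a polynomial K₁ in the variables (x, z) ∈ ℝ^d × ℝ^d such that for all x, z ∈ ℝ^d and all ε ∈ (0,1], | α(x,z,ε) − β(x,z,ε) | ≤ K₁(x,z) ε². -/

import Mathlib

open Real MeasureTheory
open scoped RealInnerProductSpace

/-- Rescaled trial density `q(x,z) = (4πD(x))^{-d/2} exp(−|z|²/(4D(x)))`. -/
noncomputable def qscaled {d : ℕ} (D : EuclideanSpace ℝ (Fin d) → ℝ)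
    (x z : EuclideanSpace ℝ (Fin d)) : ℝ :=
  (4 * π * D x) ^ (-(d : ℝ) / 2) * Real.exp (-‖z‖ ^ 2 / (4 * D x))

/-- Rescaled Metropolis–Hastings acceptance probability
`α(x,z,ε) = min(1, q(x+εz,z)ρ_eq(x+εz)/(q(x,z)ρ_eq(x)))`. -/
noncomputable def alphaScaled {d : ℕ} (D ρeq : EuclideanSpace ℝ (Fin d) → ℝ)
    (x z : EuclideanSpace ℝ (Fin d)) (ε : ℝ) : ℝ :=
  min 1 (qscaled D (x + ε • z) z * ρeq (x + ε • z) / (qscaled D x z * ρeq x))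

/-- First-order approximation
`β(x,z,ε) = min(1, exp(ε ∇_x q(x,z)·z/q(x,z) + ε ∇ρ_eq(x)·z/ρ_eq(x)))`. -/
noncomputable def betaScaled {d : ℕ} (D ρeq : EuclideanSpace ℝ (Fin d) → ℝ)
    (x z : EuclideanSpace ℝ (Fin d)) (ε : ℝ) : ℝ :=
  min 1 (Real.exp (ε * (⟪gradient (fun w => qscaled D w z) x, z⟫ / qscaled D x z)
    + ε * (⟪gradient ρeq x, z⟫ / ρeq x)))

/-! Put `h t = log (q(x + t z, z) ρ_eq(x + t z))`. Then `α = min(1, exp(h ε - h 0))` and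
`β = min(1, exp(ε h'(0)))`, so, `u ↦ min(1, eᵘ)` being 1-Lipschitz, it suffices to bound the
Taylor remainder `|h ε - h 0 - ε h'(0)| ≤ sup |h''| ε²`. Along the ray,
`h = -(d/2) log D - |z|²/(4D) + log ρ_eq + const`, and since `D ≥ c > 0` while `D` and
`log ρ_eq` have bounded first and second derivatives, `|h''| ≤ A |z|² + B |z|⁴`,
a polynomial in `z`. -/

open Set

theorem abs_min_one_exp_sub_le (a b : ℝ) :
    |min 1 (exp a) - min 1 (exp b)| ≤ |a - b| := by
  have hexp : LipschitzOnWith 1 exp (Iic 0) :=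
    (convex_Iic 0).lipschitzOnWith_of_nnnorm_hasDerivWithin_le
      (fun t _ => (hasDerivAt_exp t).hasDerivWithinAt)
      (fun t ht => by
        simpa [← NNReal.coe_le_coe, abs_of_pos (exp_pos t)] using exp_le_one_iff.2 ht)
  have hmin : LipschitzWith 1 (min 0 : ℝ → ℝ) := LipschitzWith.id.const_min 0
  have := (hexp.comp (hmin.lipschitzOnWith (s := univ)) (fun t _ => min_le_left 0 t)).dist_le_mul
    a (mem_univ a) b (mem_univ b)
  have hmin_exp (t : ℝ) : min 1 (exp t) = exp (min 0 t) := by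
    rw [exp_monotone.map_min, exp_zero]
  simpa [Real.dist_eq, hmin_exp] using this

theorem abs_sub_sub_mul_le_of_hasDerivAt {f f' f'' : ℝ → ℝ} {K ε : ℝ}
    (hf : ∀ t, HasDerivAt f (f' t) t) (hf' : ∀ t, HasDerivAt f' (f'' t) t)
    (hK : ∀ t, |f'' t| ≤ K) (hε : 0 ≤ ε) :
    |f ε - f 0 - f' 0 * ε| ≤ K * ε ^ 2 := by
  have hf'_lip : ∀ t ∈ Icc 0 ε, |f' t - f' 0| ≤ K * ε := fun t ht => by
    have := norm_image_sub_le_of_norm_deriv_le_segment' (fun s _ => (hf' s).hasDerivWithinAt)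
      (fun s _ => hK s) t ht
    rw [sub_zero] at this
    exact this.trans (mul_le_mul_of_nonneg_left ht.2 ((abs_nonneg _).trans (hK 0)))
  have := norm_image_sub_le_of_norm_deriv_le_segment' (f := fun t => f t - f' 0 * t)
    (fun t _ => ((hf t).sub ((hasDerivAt_id t).const_mul (f' 0))).hasDerivWithinAt.congr_deriv
      (by simp)) (fun t ht => hf'_lip t (Ico_subset_Icc_self ht)) ε (right_mem_Icc.2 hε)
  simp only [Real.norm_eq_abs, mul_zero, sub_zero] at this
  rwa [show f ε - f 0 - f' 0 * ε = f ε - f' 0 * ε - f 0 by ring, sq, ← mul_assoc]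

theorem abs_div_pow_le {u v m c : ℝ} (hc : 0 < c) (hcu : c ≤ u) (hv : |v| ≤ m) (n : ℕ) :
    |v / u ^ n| ≤ m / c ^ n := by
  rw [abs_div, abs_of_pos (pow_pos (hc.trans_le hcu) n)]
  gcongr
  exact (abs_nonneg v).trans hv

theorem abs_second_deriv_log_add_inv_le {u u' u'' l'' κ ν c a b m : ℝ} (hc : 0 < c)
    (hcu : c ≤ u) (ha : |u'| ≤ a) (hb : |u''| ≤ b) (hm : |l''| ≤ m) :
    |κ * (u'' / u - u' ^ 2 / u ^ 2) - ν * (u'' / u ^ 2 - 2 * u' ^ 2 / u ^ 3) + l''| ≤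
      |κ| * (b / c + a ^ 2 / c ^ 2) + |ν| * (b / c ^ 2 + 2 * a ^ 2 / c ^ 3) + m := by
  have ha2 : |u' ^ 2| ≤ a ^ 2 := by
    rw [abs_pow]
    exact pow_le_pow_left₀ (abs_nonneg _) ha 2
  have h1 : |u'' / u - u' ^ 2 / u ^ 2| ≤ b / c + a ^ 2 / c ^ 2 := by
    refine (abs_sub _ _).trans (add_le_add ?_ (abs_div_pow_le hc hcu ha2 2))
    simpa using abs_div_pow_le hc hcu hb 1
  have h2 : |u'' / u ^ 2 - 2 * u' ^ 2 / u ^ 3| ≤ b / c ^ 2 + 2 * a ^ 2 / c ^ 3 := by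
    refine (abs_sub _ _).trans (add_le_add (abs_div_pow_le hc hcu hb 2) ?_)
    rw [mul_div_assoc, mul_div_assoc, abs_mul, abs_two]
    exact mul_le_mul_of_nonneg_left (abs_div_pow_le hc hcu ha2 3) zero_le_two
  calc _ ≤ |κ| * |u'' / u - u' ^ 2 / u ^ 2| + |ν| * |u'' / u ^ 2 - 2 * u' ^ 2 / u ^ 3| + |l''| := by
        rw [← abs_mul, ← abs_mul]
        exact (abs_add_le _ _).trans (add_le_add_left (abs_sub _ _) _)
    _ ≤ _ := by gcongr

theorem abs_sub_sub_mul_le_of_eq_log_add_inv {h u u' u'' l l' l'' : ℝ → ℝ}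
    {κ ν c a b m r ε : ℝ} (hh : ∀ t, h t = κ * log (u t) + ν * (u t)⁻¹ + l t)
    (hu : ∀ t, HasDerivAt u (u' t) t) (hu' : ∀ t, HasDerivAt u' (u'' t) t)
    (hl : ∀ t, HasDerivAt l (l' t) t) (hl' : ∀ t, HasDerivAt l' (l'' t) t)
    (hc : 0 < c) (hcu : ∀ t, c ≤ u t) (ha : ∀ t, |u' t| ≤ a) (hb : ∀ t, |u'' t| ≤ b)
    (hm : ∀ t, |l'' t| ≤ m) (hr : HasDerivAt h r 0) (hε : 0 ≤ ε) :
    |h ε - h 0 - r * ε| ≤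
      (|κ| * (b / c + a ^ 2 / c ^ 2) + |ν| * (b / c ^ 2 + 2 * a ^ 2 / c ^ 3) + m) * ε ^ 2 := by
  obtain rfl : h = _ := funext hh
  have hne t : u t ≠ 0 := (hc.trans_le (hcu t)).ne'
  set g' := fun t => κ * (u' t / u t) - ν * (u' t / u t ^ 2) + l' t
  set g'' := fun t => κ * (u'' t / u t - u' t ^ 2 / u t ^ 2)
    - ν * (u'' t / u t ^ 2 - 2 * u' t ^ 2 / u t ^ 3) + l'' t
  have hg t : HasDerivAt (fun t => κ * log (u t) + ν * (u t)⁻¹ + l t) (g' t) t := by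
    refine ((((hu t).log (hne t)).const_mul κ).add (((hu t).fun_inv (hne t)).const_mul ν)
      |>.add (hl t)).congr_deriv ?_
    ring
  have hg' t : HasDerivAt g' (g'' t) t := by
    refine (((((hu' t).fun_div (hu t) (hne t)).const_mul κ).sub
      (((hu' t).fun_div ((hu t).fun_pow 2) (pow_ne_zero 2 (hne t))).const_mul ν)).add
      (hl' t)).congr_deriv ?_
    have := hne t
    simp only [g'']
    field_simp
    ring
  have hg'' t : |g'' t| ≤
      |κ| * (b / c + a ^ 2 / c ^ 2) + |ν| * (b / c ^ 2 + 2 * a ^ 2 / c ^ 3) + m :=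
    abs_second_deriv_log_add_inv_le hc (hcu t) (ha t) (hb t) (hm t)
  rw [hr.unique (hg 0)]
  exact abs_sub_sub_mul_le_of_hasDerivAt hg hg' hg'' hε

section Line

variable {E F : Type*} [NormedAddCommGroup E] [NormedSpace ℝ E] [NormedAddCommGroup F]
  [NormedSpace ℝ F] {x z : E}

theorem hasDerivAt_comp_add_smul {f : E → F} {t : ℝ} (hf : DifferentiableAt ℝ f (x + t • z)) :
    HasDerivAt (fun s : ℝ => f (x + s • z)) (fderiv ℝ f (x + t • z) z) t := by
  simpa [Function.comp_def] using
    hf.hasFDerivAt.comp_hasDerivAt t (((hasDerivAt_id t).smul_const z).const_add x)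

theorem hasDerivAt_fderiv_comp_add_smul_apply {f : E → F} {t : ℝ}
    (hf : DifferentiableAt ℝ (fderiv ℝ f) (x + t • z)) :
    HasDerivAt (fun s : ℝ => fderiv ℝ f (x + s • z) z)
      (fderiv ℝ (fderiv ℝ f) (x + t • z) z z) t := by
  simpa using (hasDerivAt_comp_add_smul hf).clm_apply (hasDerivAt_const t z)

theorem norm_fderiv_apply_le {f : E → F} {y : E} {C : ℝ} (h : ‖iteratedFDeriv ℝ 1 f y‖ ≤ C) :
    ‖fderiv ℝ f y z‖ ≤ C * ‖z‖ :=
  (fderiv ℝ f y).le_of_opNorm_le (by rwa [← norm_iteratedFDeriv_one]) z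

theorem norm_fderiv_fderiv_apply_le {f : E → F} {y : E} {C : ℝ}
    (h : ‖iteratedFDeriv ℝ 2 f y‖ ≤ C) : ‖fderiv ℝ (fderiv ℝ f) y z z‖ ≤ C * ‖z‖ ^ 2 := by
  rw [← norm_iteratedFDeriv_fderiv, norm_iteratedFDeriv_one] at h
  calc ‖fderiv ℝ (fderiv ℝ f) y z z‖ ≤ ‖fderiv ℝ (fderiv ℝ f) y‖ * ‖z‖ * ‖z‖ :=
        (fderiv ℝ (fderiv ℝ f) y).le_opNorm₂ z z
    _ ≤ C * ‖z‖ ^ 2 := by rw [mul_assoc, ← sq]; gcongr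

end Line

theorem hasDerivAt_log_comp_add_smul {E : Type*} [NormedAddCommGroup E] [InnerProductSpace ℝ E]
    [CompleteSpace E] {f : E → ℝ} {x : E} (z : E) (hf : DifferentiableAt ℝ f x) (hx : f x ≠ 0) :
    HasDerivAt (fun t : ℝ => log (f (x + t • z))) (⟪gradient f x, z⟫ / f x) 0 := by
  rw [inner_gradient_left]
  simpa using
    (hasDerivAt_comp_add_smul (t := 0) (z := z) (by simpa using hf)).log (by simpa using hx)

theorem eval_sum_X_inr_sq {ι κ : Type*} [Fintype κ] (x : ι → ℝ) (z : EuclideanSpace ℝ κ) :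
    MvPolynomial.eval (Sum.elim x fun i => z i) (∑ i, MvPolynomial.X (Sum.inr i) ^ 2) =
      ‖z‖ ^ 2 := by
  simp [EuclideanSpace.norm_sq_eq]

section ProposalDensity

variable {d : ℕ} {D ρeq : EuclideanSpace ℝ (Fin d) → ℝ}

theorem differentiableAt_qscaled {x : EuclideanSpace ℝ (Fin d)} (z : EuclideanSpace ℝ (Fin d))
    (hD : DifferentiableAt ℝ D x) (hDx : 0 < D x) :
    DifferentiableAt ℝ (fun w => qscaled D w z) x := by
  unfold qscaled
  have : 4 * π * D x ≠ 0 := by positivity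
  fun_prop (disch := first | assumption | left; assumption | positivity)

theorem qscaled_pos {w : EuclideanSpace ℝ (Fin d)} (z : EuclideanSpace ℝ (Fin d)) (hD : 0 < D w) :
    0 < qscaled D w z := by
  unfold qscaled
  positivity

noncomputable def logQRhoAlong (D ρeq : EuclideanSpace ℝ (Fin d) → ℝ)
    (x z : EuclideanSpace ℝ (Fin d)) (t : ℝ) : ℝ :=
  log (qscaled D (x + t • z) z * ρeq (x + t • z))

theorem log_qscaled_mul {w : EuclideanSpace ℝ (Fin d)} (z : EuclideanSpace ℝ (Fin d))
    (hD : 0 < D w) (hρ : 0 < ρeq w) :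
    log (qscaled D w z * ρeq w) =
      -(d / 2) * log (D w) + -(‖z‖ ^ 2 / 4) * (D w)⁻¹ +
        (-(d / 2) * log (4 * π) + log (ρeq w)) := by
  unfold qscaled
  rw [log_mul (by positivity) hρ.ne', log_mul (by positivity) (exp_pos _).ne', log_exp,
    log_rpow (by positivity), log_mul (by positivity) hD.ne']
  field_simp
  ring

theorem alphaScaled_eq_min_one_exp (hD : ∀ w, 0 < D w) (hρ : ∀ w, 0 < ρeq w)
    (x z : EuclideanSpace ℝ (Fin d)) (ε : ℝ) :
    alphaScaled D ρeq x z ε =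
      min 1 (exp (logQRhoAlong D ρeq x z ε - logQRhoAlong D ρeq x z 0)) := by
  have hpos w : 0 < qscaled D w z * ρeq w := mul_pos (qscaled_pos z (hD w)) (hρ w)
  rw [alphaScaled, exp_sub, logQRhoAlong, logQRhoAlong, exp_log (hpos _), exp_log (hpos _),
    zero_smul, add_zero]

theorem hasDerivAt_logQRhoAlong_zero (hD : ∀ w, 0 < D w) (hρ : ∀ w, 0 < ρeq w)
    {x : EuclideanSpace ℝ (Fin d)} (z : EuclideanSpace ℝ (Fin d))
    (hDx : DifferentiableAt ℝ D x) (hρx : DifferentiableAt ℝ ρeq x) :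
    HasDerivAt (logQRhoAlong D ρeq x z)
      (⟪gradient (fun w => qscaled D w z) x, z⟫ / qscaled D x z +
        ⟪gradient ρeq x, z⟫ / ρeq x) 0 :=
  ((hasDerivAt_log_comp_add_smul z (differentiableAt_qscaled z hDx (hD x))
    (qscaled_pos z (hD x)).ne').add
      (hasDerivAt_log_comp_add_smul z hρx (hρ x).ne')).congr_of_eventuallyEq
    (Filter.Eventually.of_forall fun _ => log_mul (qscaled_pos z (hD _)).ne' (hρ _).ne')

theorem exists_abs_logQRhoAlong_sub_le (hρ : ∀ x, 0 < ρeq x) (hD : ContDiff ℝ 2 D)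
    (hL : ContDiff ℝ 2 (fun x => log (ρeq x))) (hDinf : ∃ c : ℝ, 0 < c ∧ ∀ x, c ≤ D x)
    (hD₁ : ∃ C : ℝ, ∀ x, ‖iteratedFDeriv ℝ 1 D x‖ ≤ C)
    (hD₂ : ∃ C : ℝ, ∀ x, ‖iteratedFDeriv ℝ 2 D x‖ ≤ C)
    (hL₂ : ∃ C : ℝ, ∀ x, ‖iteratedFDeriv ℝ 2 (fun y => log (ρeq y)) x‖ ≤ C) :
    ∃ A B : ℝ, ∀ (x z : EuclideanSpace ℝ (Fin d)) (ε : ℝ), 0 ≤ ε →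
      |logQRhoAlong D ρeq x z ε - logQRhoAlong D ρeq x z 0 -
          (ε * (⟪gradient (fun w => qscaled D w z) x, z⟫ / qscaled D x z) +
            ε * (⟪gradient ρeq x, z⟫ / ρeq x))|
        ≤ (A * ‖z‖ ^ 2 + B * ‖z‖ ^ 4) * ε ^ 2 := by
  obtain ⟨c, hc, hcD⟩ := hDinf
  obtain ⟨M₁, hM₁⟩ := hD₁
  obtain ⟨M₂, hM₂⟩ := hD₂
  obtain ⟨ML, hML⟩ := hL₂
  have hDpos x : 0 < D x := hc.trans_le (hcD x)
  have hD' : Differentiable ℝ D := hD.differentiable (by norm_num)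
  have hD'' : Differentiable ℝ (fderiv ℝ D) :=
    (hD.fderiv_right (m := 1) le_rfl).differentiable one_ne_zero
  have hL' : Differentiable ℝ (fun x => log (ρeq x)) := hL.differentiable (by norm_num)
  have hL'' : Differentiable ℝ (fderiv ℝ (fun x => log (ρeq x))) :=
    (hL.fderiv_right (m := 1) le_rfl).differentiable one_ne_zero
  have hρ' : Differentiable ℝ ρeq := by
    simpa [exp_log (hρ _)] using hL'.exp
  refine ⟨d / 2 * (M₂ / c + M₁ ^ 2 / c ^ 2) + ML, (M₂ / c ^ 2 + 2 * M₁ ^ 2 / c ^ 3) / 4,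
    fun x z ε hε => ?_⟩
  have key := abs_sub_sub_mul_le_of_eq_log_add_inv (h := logQRhoAlong D ρeq x z)
    (fun t => log_qscaled_mul z (hDpos _) (hρ _))
    (fun t => hasDerivAt_comp_add_smul (hD' _))
    (fun t => hasDerivAt_fderiv_comp_add_smul_apply (hD'' _))
    (fun t => (hasDerivAt_comp_add_smul (hL' _)).const_add _)
    (fun t => hasDerivAt_fderiv_comp_add_smul_apply (hL'' _)) hc (fun t => hcD _)
    (fun t => by rw [← Real.norm_eq_abs]; exact norm_fderiv_apply_le (hM₁ _))
    (fun t => by rw [← Real.norm_eq_abs]; exact norm_fderiv_fderiv_apply_le (hM₂ _))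
    (fun t => by rw [← Real.norm_eq_abs]; exact norm_fderiv_fderiv_apply_le (hML _))
    (hasDerivAt_logQRhoAlong_zero hDpos hρ z (hD' x) (hρ' x)) hε
  rw [abs_neg, abs_neg, abs_of_nonneg (by positivity : (0 : ℝ) ≤ d / 2),
    abs_of_nonneg (by positivity : (0 : ℝ) ≤ ‖z‖ ^ 2 / 4)] at key
  convert key using 2 <;> ring

end ProposalDensity

theorem alpha_beta_pointwise_estimate_general {d : ℕ}
    (D ρeq : EuclideanSpace ℝ (Fin d) → ℝ)
    (hρeqpos : ∀ x, 0 < ρeq x)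
    (hDsmooth : ContDiff ℝ 4 D)
    (hLsmooth : ContDiff ℝ 4 (fun x => Real.log (ρeq x)))
    (hDbd : ∀ i : ℕ, 1 ≤ i → i ≤ 4 → ∃ C : ℝ, ∀ x, ‖iteratedFDeriv ℝ i D x‖ ≤ C)
    (hLbd : ∀ i : ℕ, 1 ≤ i → i ≤ 4 →
      ∃ C : ℝ, ∀ x, ‖iteratedFDeriv ℝ i (fun y => Real.log (ρeq y)) x‖ ≤ C)
    (hDinf : ∃ c : ℝ, 0 < c ∧ ∀ x, c ≤ D x) :
    ∃ K₁ : MvPolynomial (Fin d ⊕ Fin d) ℝ,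
      ∀ (x z : EuclideanSpace ℝ (Fin d)), ∀ ε ∈ Set.Ioc (0 : ℝ) 1,
        |alphaScaled D ρeq x z ε - betaScaled D ρeq x z ε|
          ≤ MvPolynomial.eval (Sum.elim (fun i => x i) (fun i => z i)) K₁ * ε ^ 2 := by
  obtain ⟨A, B, hAB⟩ := exists_abs_logQRhoAlong_sub_le hρeqpos (hDsmooth.of_le (by norm_num))
    (hLsmooth.of_le (by norm_num)) hDinf (hDbd 1 le_rfl (by norm_num))
    (hDbd 2 (by norm_num) (by norm_num)) (hLbd 2 (by norm_num) (by norm_num))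
  obtain ⟨c, hc, hcD⟩ := hDinf
  let S : MvPolynomial (Fin d ⊕ Fin d) ℝ := ∑ i, MvPolynomial.X (Sum.inr i) ^ 2
  refine ⟨MvPolynomial.C A * S + MvPolynomial.C B * S ^ 2, fun x z ε hε => ?_⟩
  rw [alphaScaled_eq_min_one_exp (fun w => hc.trans_le (hcD w)) hρeqpos, betaScaled]
  simp only [map_add, map_mul, map_pow, MvPolynomial.eval_C, S, eval_sum_X_inr_sq, ← pow_mul]
  exact (abs_min_one_exp_sub_le _ _).trans (hAB x z ε hε.1.le)

/-- pointwise estimate `|α(x,z,ε) − β(x,z,ε)| ≤ K₁(x,z) ε²` with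
`K₁` a polynomial in `(x,z)`. -/
theorem alpha_beta_pointwise_estimate {d : ℕ} (hd : 1 ≤ d)
    (D ρeq : EuclideanSpace ℝ (Fin d) → ℝ)
    (hρeqpos : ∀ x, 0 < ρeq x)
    (hDsmooth : ContDiff ℝ 4 D)
    (hLsmooth : ContDiff ℝ 4 (fun x => Real.log (ρeq x)))
    (hDbd : ∀ i : ℕ, 1 ≤ i → i ≤ 4 → ∃ C : ℝ, ∀ x, ‖iteratedFDeriv ℝ i D x‖ ≤ C)
    (hLbd : ∀ i : ℕ, 1 ≤ i → i ≤ 4 →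
      ∃ C : ℝ, ∀ x, ‖iteratedFDeriv ℝ i (fun y => Real.log (ρeq y)) x‖ ≤ C)
    (hDinf : ∃ c : ℝ, 0 < c ∧ ∀ x, c ≤ D x) :
    ∃ K₁ : MvPolynomial (Fin d ⊕ Fin d) ℝ,
      ∀ (x z : EuclideanSpace ℝ (Fin d)), ∀ ε ∈ Set.Ioc (0 : ℝ) 1,
        |alphaScaled D ρeq x z ε - betaScaled D ρeq x z ε|
          ≤ MvPolynomial.eval (Sum.elim (fun i => x i) (fun i => z i)) K₁ * ε ^ 2 :=
  alpha_beta_pointwise_estimate_general D ρeq hρeqpos hDsmooth hLsmooth hDbd hLbd hDinf
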